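/- Let $q, r \in (1,2)$ and suppose $\mathscr{A}, \mathscr{B} \subseteq \mathbb{N}$ satisfy $I_q(N;\mathscr{A}) \ll N^{q-1}$ and $I_r(N;\mathscr{B}) \ll N^{r-1}$ for large $N$. Define $p$ by $1/p = 1/q + 1/r - 1$ and assume $3/2 < 1/q + 1/r < 2$. If $\mathscr{C} = \mathscr{A} \cap \mathscr{B}$ has positive lower density, then $I_p(N;\mathscr{C}) \ll N^{p-1}$ for all large $N$; that is, $\mathscr{C}$ is a strongly subconvex $L^p$-set. -/

import Mathlib

open Complex Finset MeasureTheory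
open scoped Real Classical

/-- `e x = exp(2πix)` -/
noncomputable def e (x : ℝ) : ℂ := Complex.exp (2 * Real.pi * Complex.I * x)

/-- The elements of `A` in `[1, N]`, as a finset. -/
noncomputable def AN (A : Set ℕ) (N : ℝ) : Finset ℕ :=
  (Finset.Icc 1 ⌊N⌋₊).filter (· ∈ A)

/-- The mean value `I_p(N; A)`. -/
noncomputable def Ip (p : ℝ) (A : Set ℕ) (N : ℝ) : ℝ :=
  ∫ α in (0:ℝ)..(1:ℝ), ‖∑ n ∈ AN A N, e (n * α)‖ ^ p

open scoped ENNReal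

lemma e_add (x y : ℝ) : e (x + y) = e x * e y := by
  simp only [e, ← Complex.exp_add]; push_cast; ring_nf

lemma e_norm (x : ℝ) : ‖e x‖ = 1 := by
  simp only [e, Complex.norm_exp]
  norm_num [Complex.mul_re, Complex.mul_im]

lemma e_orth (m n : ℕ) :
    (∫ β in (0:ℝ)..1, e (n * β) * e (-(m * β))) = if n = m then 1 else 0 := by
  have key : ∀ β : ℝ, e (n * β) * e (-(m * β))
      = Complex.exp (((n:ℂ) - m) * (2 * Real.pi * Complex.I) * β) := by
    intro β
    simp only [e, ← Complex.exp_add]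
    congr 1; push_cast; ring
  simp only [key]
  rcases eq_or_ne n m with h | h
  · simp [h]
  · rw [if_neg h]
    have hc : ((n:ℂ) - m) * (2 * Real.pi * Complex.I) ≠ 0 := by
      apply mul_ne_zero
      · rw [sub_ne_zero]; exact_mod_cast fun hnm => h (Nat.cast_injective hnm)
      · simp [Real.pi_ne_zero, Complex.I_ne_zero]
    have := integral_exp_mul_complex (a := (0:ℝ)) (b := 1) hc
    simp only [mul_assoc] at this ⊢
    rw [this, div_eq_zero_iff]
    left
    rw [sub_eq_zero]
    have h1 : ((n:ℂ) - m) * (2 * ((Real.pi:ℂ) * (Complex.I * ((1:ℝ):ℂ)))) = ((n - m : ℤ) : ℂ) * (2 * Real.pi * Complex.I) := by push_cast; ring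
    rw [h1, Complex.exp_int_mul_two_pi_mul_I]
    norm_num

@[fun_prop]
lemma e_continuous : Continuous e := by
  unfold e; fun_prop

lemma conv_sum (S T : Finset ℕ) (α : ℝ) :
    (∫ β in (0:ℝ)..1, (∑ m ∈ S, e (m * (α - β))) * (∑ n ∈ T, e (n * β)))
      = ∑ n ∈ S ∩ T, e (n * α) := by
  have h1 : ∀ β : ℝ, (∑ m ∈ S, e (m * (α - β))) * (∑ n ∈ T, e (n * β))
      = ∑ m ∈ S, ∑ n ∈ T, e (m * α) * (e (n * β) * e (-(m * β))) := by
    intro β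
    rw [Finset.sum_mul_sum]
    refine Finset.sum_congr rfl fun m _ => Finset.sum_congr rfl fun n _ => ?_
    have h : (m:ℝ) * (α - β) = m * α + (-(m * β)) := by ring
    rw [h, e_add]; ring
  simp only [h1]
  rw [intervalIntegral.integral_finset_sum]
  swap
  · intro m _
    apply Continuous.intervalIntegrable
    fun_prop
  have h2 : ∀ m ∈ S, (∫ β in (0:ℝ)..1, ∑ n ∈ T, e (m * α) * (e (n * β) * e (-(m * β))))
      = if m ∈ T then e (m * α) else 0 := by
    intro m _
    rw [intervalIntegral.integral_finset_sum]
    swap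
    · intro n _
      apply Continuous.intervalIntegrable
      fun_prop
    have h3 : ∀ n ∈ T, (∫ β in (0:ℝ)..1, e (m * α) * (e (n * β) * e (-(m * β))))
        = if n = m then e (m * α) else 0 := by
      intro n _
      rw [intervalIntegral.integral_const_mul, e_orth]
      split <;> simp
    rw [Finset.sum_congr rfl h3, Finset.sum_ite_eq' T m (fun _ => e (m * α))]
  rw [Finset.sum_congr rfl h2, Finset.sum_ite_mem, Finset.inter_comm]

lemma e_nat (n : ℕ) : e n = 1 := by
  have : (2 * Real.pi * Complex.I * (n:ℝ) : ℂ) = ((n:ℤ):ℂ) * (2 * Real.pi * Complex.I) := by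
    push_cast; ring
  rw [e, this, Complex.exp_int_mul_two_pi_mul_I]

lemma f_periodic (S : Finset ℕ) : Function.Periodic (fun α => ∑ n ∈ S, e (n * α)) 1 := by
  intro α
  refine Finset.sum_congr rfl fun n _ => ?_
  have h : (n:ℝ) * (α + 1) = n * α + n := by ring
  rw [h, e_add, e_nat, mul_one]

lemma F_periodic (S : Finset ℕ) (s : ℝ) :
    Function.Periodic (fun α => ‖∑ n ∈ S, e (n * α)‖ ^ s) 1 := by
  intro α
  simp only [f_periodic S α]

lemma periodic_shift {g : ℝ → ℝ} (hg : Function.Periodic g 1) (α : ℝ) :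
    (∫ β in (0:ℝ)..1, g (α - β)) = ∫ β in (0:ℝ)..1, g β := by
  rw [intervalIntegral.integral_comp_sub_left g α]
  have := hg.intervalIntegral_add_eq (α - 1) 0
  norm_num at this ⊢
  convert this using 2

lemma periodic_shift' {g : ℝ → ℝ} (hg : Function.Periodic g 1) (β : ℝ) :
    (∫ α in (0:ℝ)..1, g (α - β)) = ∫ α in (0:ℝ)..1, g α := by
  rw [intervalIntegral.integral_comp_sub_right g β]
  have := hg.intervalIntegral_add_eq (0 - β) 0
  norm_num at this ⊢
  convert this using 2; ring

instance : IsFiniteMeasure (volume.restrict (Set.Ioc (0:ℝ) 1)) :=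
  ⟨by simp [Real.volume_Ioc]⟩

lemma memLp_cb {f : ℝ → ℝ} (hf : Continuous f) (C : ℝ) (hC : ∀ x, ‖f x‖ ≤ C) (s : ℝ≥0∞) :
    MemLp f s (volume.restrict (Set.Ioc (0:ℝ) 1)) :=
  MemLp.of_bound hf.aestronglyMeasurable C (Filter.Eventually.of_forall hC)

lemma holder_step (F G : ℝ → ℝ) (hF : Continuous F) (hG : Continuous G)
    (hF0 : ∀ x, 0 ≤ F x) (hG0 : ∀ x, 0 ≤ G x)
    (CF CG : ℝ) (hFB : ∀ x, F x ≤ CF) (hGB : ∀ x, G x ≤ CG)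
    (q r p : ℝ) (hq1 : 1 < q) (hr1 : 1 < r) (hp1 : 1 < p) (hqp : q < p) (hrp : r < p)
    (hp : 1 / p = 1 / q + 1 / r - 1) :
    (∫ β in (0:ℝ)..1, F β * G β)
      ≤ (∫ β in (0:ℝ)..1, F β ^ q * G β ^ r) ^ (1/p)
        * (∫ β in (0:ℝ)..1, F β ^ q) ^ (1/q - 1/p)
        * (∫ β in (0:ℝ)..1, G β ^ r) ^ (1/r - 1/p) := by
  have hq0 : (0:ℝ) < q := lt_trans one_pos hq1
  have hr0 : (0:ℝ) < r := lt_trans one_pos hr1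
  have hp0 : (0:ℝ) < p := lt_trans one_pos hp1
  have hu : (0:ℝ) < 1/q - 1/p := by
    have := one_div_lt_one_div_of_lt hq0 hqp; linarith
  have hv : (0:ℝ) < 1/r - 1/p := by
    have := one_div_lt_one_div_of_lt hr0 hrp; linarith
  have hCF0 : 0 ≤ CF := le_trans (hF0 0) (hFB 0)
  have hCG0 : 0 ≤ CG := le_trans (hG0 0) (hGB 0)
  set p' : ℝ := p / (p - 1) with hp'def
  have hp'0 : 0 < p' := div_pos hp0 (by linarith)
  have hpp' : p.HolderConjugate p' := Real.holderConjugate_iff.mpr ⟨hp1, by rw [hp'def]; field_simp; ring⟩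
  set u : ℝ := 1/q - 1/p
  set v : ℝ := 1/r - 1/p
  have hne : p - 1 ≠ 0 := ne_of_gt (by linarith)
  have huv : u + v = 1 - 1/p := by simp only [u, v]; linarith [hp]
  have hsum : p' * u + p' * v = 1 := by
    calc p' * u + p' * v = p' * (u + v) := by ring
    _ = (p/(p-1)) * (1 - 1/p) := by rw [huv, hp'def]
    _ = 1 := by field_simp
  -- exponent identities
  have eF : q*(1/p) + q*u = 1 := by simp only [u]; field_simp; ring
  have eG : r*(1/p) + r*v = 1 := by simp only [v]; field_simp; ring
  have hp'ne : p' ≠ 0 := ne_of_gt hp'0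
  have hqu : (0:ℝ) < q*u := mul_pos hq0 hu
  have hrv : (0:ℝ) < r*v := mul_pos hr0 hv
  have hqup' : (0:ℝ) < q*u*p' := mul_pos hqu hp'0
  have hrvp' : (0:ℝ) < r*v*p' := mul_pos hrv hp'0
  have hp'u : (0:ℝ) < p'*u := mul_pos hp'0 hu
  have hp'v : (0:ℝ) < p'*v := mul_pos hp'0 hv
  have Fnn : ∀ (x : ℝ) (s : ℝ), (0:ℝ) ≤ F x ^ s := fun x s => Real.rpow_nonneg (hF0 x) s
  have Gnn : ∀ (x : ℝ) (s : ℝ), (0:ℝ) ≤ G x ^ s := fun x s => Real.rpow_nonneg (hG0 x) s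
  have FGnn : ∀ (x : ℝ) (s t : ℝ), (0:ℝ) ≤ F x ^ s * G x ^ t :=
    fun x s t => mul_nonneg (Fnn x s) (Gnn x t)
  have CFnn : ∀ s : ℝ, (0:ℝ) ≤ CF ^ s := fun s => Real.rpow_nonneg hCF0 s
  have CGnn : ∀ s : ℝ, (0:ℝ) ≤ CG ^ s := fun s => Real.rpow_nonneg hCG0 s
  have hFq : Continuous (fun x => F x ^ q) := hF.rpow_const fun x => Or.inr hq0.le
  have hGr : Continuous (fun x => G x ^ r) := hG.rpow_const fun x => Or.inr hr0.le
  have key1 : ∀ β, F β * G β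
      = (F β ^ q * G β ^ r) ^ (1/p) * (F β ^ (q*u) * G β ^ (r*v)) := by
    intro β
    rw [Real.mul_rpow (Fnn β q) (Gnn β r),
        ← Real.rpow_mul (hF0 β), ← Real.rpow_mul (hG0 β), mul_mul_mul_comm,
        ← Real.rpow_add' (hF0 β) (by rw [eF]; norm_num),
        ← Real.rpow_add' (hG0 β) (by rw [eG]; norm_num),
        eF, eG, Real.rpow_one, Real.rpow_one]
  set μ := volume.restrict (Set.Ioc (0:ℝ) 1) with hμ
  simp only [intervalIntegral.integral_of_le (zero_le_one (α := ℝ))]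
  have hUp : ∀ β, ((F β ^ q * G β ^ r) ^ (1/p)) ^ p = F β ^ q * G β ^ r := by
    intro β
    rw [← Real.rpow_mul (FGnn β q r), one_div_mul_cancel (ne_of_gt hp0), Real.rpow_one]
  have memU : MemLp (fun β => (F β ^ q * G β ^ r) ^ (1/p)) (ENNReal.ofReal p) μ := by
    apply memLp_cb ((hFq.mul hGr).rpow_const fun x => Or.inr (by positivity))
      ((CF ^ q * CG ^ r) ^ (1/p))
    intro x
    simp only [Pi.mul_apply]
    rw [Real.norm_of_nonneg (Real.rpow_nonneg (FGnn x q r) _)]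
    apply Real.rpow_le_rpow (FGnn x q r) ?_ (by positivity)
    exact mul_le_mul (Real.rpow_le_rpow (hF0 x) (hFB x) hq0.le)
      (Real.rpow_le_rpow (hG0 x) (hGB x) hr0.le) (Gnn x r) (CFnn q)
  have memV : MemLp (fun β => F β ^ (q*u) * G β ^ (r*v)) (ENNReal.ofReal p') μ := by
    apply memLp_cb ((hF.rpow_const fun x => Or.inr hqu.le).mul
      (hG.rpow_const fun x => Or.inr hrv.le)) (CF ^ (q*u) * CG ^ (r*v))
    intro x
    simp only [Pi.mul_apply]
    rw [Real.norm_of_nonneg (FGnn x _ _)]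
    exact mul_le_mul (Real.rpow_le_rpow (hF0 x) (hFB x) hqu.le)
      (Real.rpow_le_rpow (hG0 x) (hGB x) hrv.le) (Gnn x _) (CFnn _)
  have H1 : (∫ β, F β * G β ∂μ)
      ≤ (∫ β, ((F β ^ q * G β ^ r) ^ (1/p)) ^ p ∂μ) ^ (1/p)
        * (∫ β, (F β ^ (q*u) * G β ^ (r*v)) ^ p' ∂μ) ^ (1/p') := by
    simp only [key1]
    exact integral_mul_le_Lp_mul_Lq_of_nonneg hpp'
      (Filter.Eventually.of_forall fun x => Real.rpow_nonneg (FGnn x q r) _)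
      (Filter.Eventually.of_forall fun x => FGnn x _ _) memU memV
  -- second Hölder
  have hab : Real.HolderConjugate ((p'*u)⁻¹) ((p'*v)⁻¹) := by
    refine Real.holderConjugate_iff.mpr ⟨one_lt_inv_iff₀.mpr ⟨hp'u, ?_⟩, by rw [inv_inv, inv_inv]; exact hsum⟩
    nlinarith
  have eA : (q*u*p') * (p'*u)⁻¹ = q := by
    field_simp
  have eB : (r*v*p') * (p'*v)⁻¹ = r := by
    field_simp
  have memf : MemLp (fun β => F β ^ (q*u*p')) (ENNReal.ofReal ((p'*u)⁻¹)) μ := by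
    apply memLp_cb (hF.rpow_const fun x => Or.inr hqup'.le) (CF ^ (q*u*p'))
    intro x
    rw [Real.norm_of_nonneg (Fnn x _)]
    exact Real.rpow_le_rpow (hF0 x) (hFB x) hqup'.le
  have memg : MemLp (fun β => G β ^ (r*v*p')) (ENNReal.ofReal ((p'*v)⁻¹)) μ := by
    apply memLp_cb (hG.rpow_const fun x => Or.inr hrvp'.le) (CG ^ (r*v*p'))
    intro x
    rw [Real.norm_of_nonneg (Gnn x _)]
    exact Real.rpow_le_rpow (hG0 x) (hGB x) hrvp'.le
  have H2 : (∫ β, (F β ^ (q*u) * G β ^ (r*v)) ^ p' ∂μ)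
      ≤ (∫ β, F β ^ q ∂μ) ^ (p'*u) * (∫ β, G β ^ r ∂μ) ^ (p'*v) := by
    have hVp' : ∀ β, (F β ^ (q*u) * G β ^ (r*v)) ^ p'
        = F β ^ (q*u*p') * G β ^ (r*v*p') := by
      intro β
      rw [Real.mul_rpow (Fnn β _) (Gnn β _),
        ← Real.rpow_mul (hF0 β), ← Real.rpow_mul (hG0 β)]
    simp only [hVp']
    have := integral_mul_le_Lp_mul_Lq_of_nonneg (μ := μ) hab
      (f := fun β => F β ^ (q*u*p')) (g := fun β => G β ^ (r*v*p'))
      (Filter.Eventually.of_forall fun x => Fnn x _)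
      (Filter.Eventually.of_forall fun x => Gnn x _) memf memg
    refine le_trans this (le_of_eq ?_)
    have r1 : ∀ β : ℝ, (F β ^ (q*u*p')) ^ ((p'*u)⁻¹) = F β ^ q := by
      intro β; rw [← Real.rpow_mul (hF0 β), eA]
    have r2 : ∀ β : ℝ, (G β ^ (r*v*p')) ^ ((p'*v)⁻¹) = G β ^ r := by
      intro β; rw [← Real.rpow_mul (hG0 β), eB]
    simp only [r1, r2, one_div, inv_inv]
  -- combine
  have hKq0 : 0 ≤ ∫ β, F β ^ q ∂μ := integral_nonneg fun x => Fnn x q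
  have hKr0 : 0 ≤ ∫ β, G β ^ r ∂μ := integral_nonneg fun x => Gnn x r
  have H3 : ((∫ β, (F β ^ (q*u) * G β ^ (r*v)) ^ p' ∂μ)) ^ (1/p')
      ≤ (∫ β, F β ^ q ∂μ) ^ u * (∫ β, G β ^ r ∂μ) ^ v := by
    refine le_trans (Real.rpow_le_rpow
      (integral_nonneg fun x => Real.rpow_nonneg (FGnn x _ _) _) H2
      (by positivity)) (le_of_eq ?_)
    rw [Real.mul_rpow (Real.rpow_nonneg hKq0 _) (Real.rpow_nonneg hKr0 _),
      ← Real.rpow_mul hKq0, ← Real.rpow_mul hKr0]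
    congr 2
    · field_simp
    · field_simp
  calc (∫ β, F β * G β ∂μ)
      ≤ (∫ β, ((F β ^ q * G β ^ r) ^ (1/p)) ^ p ∂μ) ^ (1/p)
        * (∫ β, (F β ^ (q*u) * G β ^ (r*v)) ^ p' ∂μ) ^ (1/p') := H1
    _ ≤ (∫ β, ((F β ^ q * G β ^ r) ^ (1/p)) ^ p ∂μ) ^ (1/p)
        * ((∫ β, F β ^ q ∂μ) ^ u * (∫ β, G β ^ r ∂μ) ^ v) := by
        apply mul_le_mul_of_nonneg_left H3
        exact Real.rpow_nonneg (integral_nonneg fun x =>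
          Real.rpow_nonneg (Real.rpow_nonneg (FGnn x q r) _) _) _
    _ = (∫ β, F β ^ q * G β ^ r ∂μ) ^ (1/p)
        * (∫ β, F β ^ q ∂μ) ^ u * (∫ β, G β ^ r ∂μ) ^ v := by
        simp only [hUp]; ring

lemma shift_pow (S : Finset ℕ) (s α : ℝ) :
    (∫ β in (0:ℝ)..1, ‖∑ n ∈ S, e (n * (α - β))‖ ^ s)
      = ∫ β in (0:ℝ)..1, ‖∑ n ∈ S, e (n * β)‖ ^ s := by
  simpa using periodic_shift (F_periodic S s) α

lemma shift_pow' (S : Finset ℕ) (s β : ℝ) :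
    (∫ α in (0:ℝ)..1, ‖∑ n ∈ S, e (n * (α - β))‖ ^ s)
      = ∫ α in (0:ℝ)..1, ‖∑ n ∈ S, e (n * α)‖ ^ s := by
  simpa using periodic_shift' (F_periodic S s) β

lemma sum_norm_le (S : Finset ℕ) (x : ℝ) : ‖∑ n ∈ S, e (n * x)‖ ≤ (S.card : ℝ) := by
  refine le_trans (norm_sum_le S _) (le_of_eq ?_)
  simp only [e_norm, Finset.sum_const, nsmul_eq_mul, mul_one]

@[fun_prop]
lemma sum_e_continuous (S : Finset ℕ) : Continuous (fun x : ℝ => ‖∑ n ∈ S, e (n * x)‖) := by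
  fun_prop

lemma W_integrable (S T : Finset ℕ) (q r : ℝ) (hq0 : 0 ≤ q) (hr0 : 0 ≤ r) :
    Integrable (fun z : ℝ × ℝ => ‖∑ n ∈ S, e (n * (z.1 - z.2))‖ ^ q
        * ‖∑ n ∈ T, e (n * z.2)‖ ^ r)
      ((volume.restrict (Set.Ioc (0:ℝ) 1)).prod (volume.restrict (Set.Ioc (0:ℝ) 1))) := by
  have hW : Continuous (fun z : ℝ × ℝ => ‖∑ n ∈ S, e (n * (z.1 - z.2))‖ ^ q
      * ‖∑ n ∈ T, e (n * z.2)‖ ^ r) := by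
    apply Continuous.mul
    · exact (((sum_e_continuous S).comp (continuous_fst.sub continuous_snd)).rpow_const
        fun x => Or.inr hq0)
    · exact (((sum_e_continuous T).comp continuous_snd).rpow_const fun x => Or.inr hr0)
  rw [← memLp_one_iff_integrable]
  refine MemLp.of_bound hW.aestronglyMeasurable ((S.card : ℝ) ^ q * (T.card : ℝ) ^ r)
    (Filter.Eventually.of_forall fun z => ?_)
  rw [Real.norm_of_nonneg (mul_nonneg (Real.rpow_nonneg (norm_nonneg _) _)
    (Real.rpow_nonneg (norm_nonneg _) _))]
  exact mul_le_mul (Real.rpow_le_rpow (norm_nonneg _) (sum_norm_le S _) hq0)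
    (Real.rpow_le_rpow (norm_nonneg _) (sum_norm_le T _) hr0)
    (Real.rpow_nonneg (norm_nonneg _) _) (Real.rpow_nonneg (Nat.cast_nonneg _) _)

lemma fubini_key (S T : Finset ℕ) (q r : ℝ) (hq0 : 0 ≤ q) (hr0 : 0 ≤ r) :
    (∫ α in (0:ℝ)..1, ∫ β in (0:ℝ)..1,
        ‖∑ n ∈ S, e (n * (α - β))‖ ^ q * ‖∑ n ∈ T, e (n * β)‖ ^ r)
      = (∫ α in (0:ℝ)..1, ‖∑ n ∈ S, e (n * α)‖ ^ q)
        * (∫ β in (0:ℝ)..1, ‖∑ n ∈ T, e (n * β)‖ ^ r) := by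
  have swap := integral_integral_swap (μ := volume.restrict (Set.Ioc (0:ℝ) 1))
    (ν := volume.restrict (Set.Ioc (0:ℝ) 1))
    (f := fun α β => ‖∑ n ∈ S, e (n * (α - β))‖ ^ q * ‖∑ n ∈ T, e (n * β)‖ ^ r)
    (W_integrable S T q r hq0 hr0)
  simp only [intervalIntegral.integral_of_le (zero_le_one (α := ℝ))]
  rw [swap]
  have inner : ∀ β : ℝ, (∫ α in Set.Ioc (0:ℝ) 1,
      ‖∑ n ∈ S, e (n * (α - β))‖ ^ q * ‖∑ n ∈ T, e (n * β)‖ ^ r)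
      = (∫ α in Set.Ioc (0:ℝ) 1, ‖∑ n ∈ S, e (n * α)‖ ^ q) * ‖∑ n ∈ T, e (n * β)‖ ^ r := by
    intro β
    rw [MeasureTheory.integral_mul_const]
    congr 1
    have := shift_pow' S q β
    simpa [intervalIntegral.integral_of_le (zero_le_one (α := ℝ))] using this
  simp only [inner]
  rw [MeasureTheory.integral_const_mul]

lemma young (S T : Finset ℕ) (q r p : ℝ) (hq1 : 1 < q) (hr1 : 1 < r) (hp1 : 1 < p)
    (hqp : q < p) (hrp : r < p) (hp : 1 / p = 1 / q + 1 / r - 1) :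
    (∫ α in (0:ℝ)..1, ‖∑ n ∈ S ∩ T, e (n * α)‖ ^ p)
      ≤ (∫ α in (0:ℝ)..1, ‖∑ n ∈ S, e (n * α)‖ ^ q) ^ (p/q)
        * (∫ α in (0:ℝ)..1, ‖∑ n ∈ T, e (n * α)‖ ^ r) ^ (p/r) := by
  have hq0 : (0:ℝ) < q := lt_trans one_pos hq1
  have hr0 : (0:ℝ) < r := lt_trans one_pos hr1
  have hp0 : (0:ℝ) < p := lt_trans one_pos hp1
  set u : ℝ := 1/q - 1/p with hudef
  set v : ℝ := 1/r - 1/p with hvdef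
  have hu : (0:ℝ) < u := by
    have := one_div_lt_one_div_of_lt hq0 hqp; simp only [hudef]; linarith
  have hv : (0:ℝ) < v := by
    have := one_div_lt_one_div_of_lt hr0 hrp; simp only [hvdef]; linarith
  set Kq : ℝ := ∫ α in (0:ℝ)..1, ‖∑ n ∈ S, e (n * α)‖ ^ q with hKqdef
  set Kr : ℝ := ∫ α in (0:ℝ)..1, ‖∑ n ∈ T, e (n * α)‖ ^ r with hKrdef
  have hKq0 : 0 ≤ Kq := by
    rw [hKqdef]
    exact intervalIntegral.integral_nonneg zero_le_one
      fun x _ => Real.rpow_nonneg (norm_nonneg _) _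
  have hKr0 : 0 ≤ Kr := by
    rw [hKrdef]
    exact intervalIntegral.integral_nonneg zero_le_one
      fun x _ => Real.rpow_nonneg (norm_nonneg _) _
  -- pointwise bound
  have pointwise : ∀ α : ℝ, ‖∑ n ∈ S ∩ T, e (n * α)‖ ^ p
      ≤ (∫ β in (0:ℝ)..1, ‖∑ n ∈ S, e (n * (α - β))‖ ^ q * ‖∑ n ∈ T, e (n * β)‖ ^ r)
        * (Kq ^ (u*p) * Kr ^ (v*p)) := by
    intro α
    have hH0 : 0 ≤ ∫ β in (0:ℝ)..1,
        ‖∑ n ∈ S, e (n * (α - β))‖ ^ q * ‖∑ n ∈ T, e (n * β)‖ ^ r :=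
      intervalIntegral.integral_nonneg zero_le_one fun x _ =>
        mul_nonneg (Real.rpow_nonneg (norm_nonneg _) _) (Real.rpow_nonneg (norm_nonneg _) _)
    have hstep1 : ‖∑ n ∈ S ∩ T, e (n * α)‖
        ≤ ∫ β in (0:ℝ)..1, ‖∑ n ∈ S, e (n * (α - β))‖ * ‖∑ n ∈ T, e (n * β)‖ := by
      rw [← conv_sum S T α]
      refine le_trans (intervalIntegral.norm_integral_le_integral_norm zero_le_one) ?_
      refine le_of_eq (intervalIntegral.integral_congr fun β _ => ?_)
      exact norm_mul _ _
    have hstep2 := holder_step (fun β => ‖∑ n ∈ S, e (n * (α - β))‖)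
      (fun β => ‖∑ n ∈ T, e (n * β)‖)
      ((sum_e_continuous S).comp (continuous_const.sub continuous_id))
      (sum_e_continuous T)
      (fun x => norm_nonneg _) (fun x => norm_nonneg _)
      (S.card : ℝ) (T.card : ℝ) (fun x => sum_norm_le S _) (fun x => sum_norm_le T _)
      q r p hq1 hr1 hp1 hqp hrp hp
    simp only [shift_pow S q α] at hstep2
    have hcomb : ‖∑ n ∈ S ∩ T, e (n * α)‖
        ≤ ((∫ β in (0:ℝ)..1, ‖∑ n ∈ S, e (n * (α - β))‖ ^ q * ‖∑ n ∈ T, e (n * β)‖ ^ r)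
            ^ (1/p)) * Kq ^ u * Kr ^ v := le_trans hstep1 hstep2
    have := Real.rpow_le_rpow (norm_nonneg _) hcomb hp0.le
    refine le_trans this (le_of_eq ?_)
    rw [Real.mul_rpow (mul_nonneg (Real.rpow_nonneg hH0 _) (Real.rpow_nonneg hKq0 _))
          (Real.rpow_nonneg hKr0 _),
        Real.mul_rpow (Real.rpow_nonneg hH0 _) (Real.rpow_nonneg hKq0 _),
        ← Real.rpow_mul hH0, ← Real.rpow_mul hKq0, ← Real.rpow_mul hKr0,
        one_div_mul_cancel (ne_of_gt hp0), Real.rpow_one]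
    ring
  -- integrate the pointwise bound
  have int1 : IntervalIntegrable (fun α => ‖∑ n ∈ S ∩ T, e (n * α)‖ ^ p) volume 0 1 :=
    (((sum_e_continuous (S ∩ T))).rpow_const fun x => Or.inr hp0.le).intervalIntegrable 0 1
  have int2 : IntervalIntegrable (fun α =>
      (∫ β in (0:ℝ)..1, ‖∑ n ∈ S, e (n * (α - β))‖ ^ q * ‖∑ n ∈ T, e (n * β)‖ ^ r)
        * (Kq ^ (u*p) * Kr ^ (v*p))) volume 0 1 := by
    rw [intervalIntegrable_iff_integrableOn_Ioc_of_le zero_le_one]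
    simp only [intervalIntegral.integral_of_le (zero_le_one (α := ℝ))]
    exact ((W_integrable S T q r hq0.le hr0.le).integral_prod_left).mul_const _
  calc (∫ α in (0:ℝ)..1, ‖∑ n ∈ S ∩ T, e (n * α)‖ ^ p)
      ≤ ∫ α in (0:ℝ)..1,
          (∫ β in (0:ℝ)..1, ‖∑ n ∈ S, e (n * (α - β))‖ ^ q * ‖∑ n ∈ T, e (n * β)‖ ^ r)
            * (Kq ^ (u*p) * Kr ^ (v*p)) :=
      intervalIntegral.integral_mono_on zero_le_one int1 int2 fun α _ => pointwise α
    _ = (∫ α in (0:ℝ)..1,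
          (∫ β in (0:ℝ)..1, ‖∑ n ∈ S, e (n * (α - β))‖ ^ q * ‖∑ n ∈ T, e (n * β)‖ ^ r))
            * (Kq ^ (u*p) * Kr ^ (v*p)) := by
      rw [intervalIntegral.integral_mul_const]
    _ = Kq * Kr * (Kq ^ (u*p) * Kr ^ (v*p)) := by
      rw [fubini_key S T q r hq0.le hr0.le]
    _ = Kq ^ (p/q) * Kr ^ (p/r) := by
      have e1 : p/q = 1 + u*p := by simp only [hudef]; field_simp; ring
      have e2 : p/r = 1 + v*p := by simp only [hvdef]; field_simp; ring
      rw [e1, e2, Real.rpow_add' hKq0 (by rw [← e1]; positivity),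
        Real.rpow_add' hKr0 (by rw [← e2]; positivity), Real.rpow_one, Real.rpow_one]
      ring

/-- Intersections: if `A` is strongly subconvex `L^q`, `B` is strongly subconvex
`L^r`, `1/p = 1/q + 1/r - 1`, `3/2 < 1/q + 1/r < 2`, and `A ∩ B` has positive
lower density, then `A ∩ B` is a strongly subconvex `L^p`-set. -/
theorem stmt_9 (q r : ℝ) (hq1 : 1 < q) (hq2 : q < 2) (hr1 : 1 < r) (hr2 : r < 2)
    (A B : Set ℕ) (Ca Cb N₀ : ℝ)
    (hA : ∀ N : ℝ, N₀ ≤ N → Ip q A N ≤ Ca * N ^ (q - 1))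
    (hB : ∀ N : ℝ, N₀ ≤ N → Ip r B N ≤ Cb * N ^ (r - 1))
    (p : ℝ) (hp : 1 / p = 1 / q + 1 / r - 1)
    (hlow : 3 / 2 < 1 / q + 1 / r) (hhigh : 1 / q + 1 / r < 2)
    (c N₂ : ℝ) (hc : 0 < c)
    (hdens : ∀ N : ℝ, N₂ ≤ N → c * N ≤ ((AN (A ∩ B) N).card : ℝ)) :
    ∃ C N₁ : ℝ, ∀ N : ℝ, N₁ ≤ N → Ip p (A ∩ B) N ≤ C * N ^ (p - 1) := by
  have hq0 : (0:ℝ) < q := lt_trans one_pos hq1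
  have hr0 : (0:ℝ) < r := lt_trans one_pos hr1
  have hiplow : (1:ℝ)/2 < 1/p := by rw [hp]; linarith
  have hiphigh : 1/p < 1 := by rw [hp]; linarith
  have hp0 : (0:ℝ) < p := by
    by_contra h
    push_neg at h
    have : 1/p ≤ 0 := one_div_nonpos.mpr h
    linarith
  have hp1 : 1 < p := by
    have h := hiphigh
    rw [div_lt_one hp0] at h
    exact h
  have hiq1 : 1/q < 1 := by rw [div_lt_one hq0]; exact hq1
  have hir1 : 1/r < 1 := by rw [div_lt_one hr0]; exact hr1
  have hqp : q < p := by
    have : 1/p < 1/q := by rw [hp]; linarith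
    exact lt_of_one_div_lt_one_div hp0 this
  have hrp : r < p := by
    have : 1/p < 1/r := by rw [hp]; linarith
    exact lt_of_one_div_lt_one_div hp0 this
  have Ipnn : ∀ (s : ℝ) (D : Set ℕ) (M : ℝ), 0 ≤ Ip s D M := fun s D M =>
    intervalIntegral.integral_nonneg zero_le_one fun x _ => Real.rpow_nonneg (norm_nonneg _) _
  refine ⟨(max Ca 0) ^ (p/q) * (max Cb 0) ^ (p/r), max N₀ 1, fun N hN => ?_⟩
  have hN0 : (0:ℝ) < N := lt_of_lt_of_le one_pos (le_trans (le_max_right N₀ 1) hN)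
  have hNq : (0:ℝ) ≤ N ^ (q-1) := Real.rpow_nonneg hN0.le _
  have hNr : (0:ℝ) ≤ N ^ (r-1) := Real.rpow_nonneg hN0.le _
  have hANeq : AN (A ∩ B) N = AN A N ∩ AN B N := by
    ext n
    simp only [AN, Finset.mem_inter, Finset.mem_filter, Set.mem_inter_iff]
    tauto
  have hyoung := young (AN A N) (AN B N) q r p hq1 hr1 hp1 hqp hrp hp
  have hCa : Ip q A N ≤ max Ca 0 * N ^ (q-1) :=
    le_trans (hA N (le_trans (le_max_left N₀ 1) hN))
      (mul_le_mul_of_nonneg_right (le_max_left Ca 0) hNq)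
  have hCb : Ip r B N ≤ max Cb 0 * N ^ (r-1) :=
    le_trans (hB N (le_trans (le_max_left N₀ 1) hN))
      (mul_le_mul_of_nonneg_right (le_max_left Cb 0) hNr)
  have h3 : p * (1/p) = 1 := by field_simp
  have h4 : q * (1/q) = 1 := by field_simp
  have h5 : r * (1/r) = 1 := by field_simp
  have expo : (q-1)*(p/q) + (r-1)*(p/r) = p - 1 := by
    linear_combination p*hp - h3 + p*h4 + p*h5
  calc Ip p (A ∩ B) N
      = ∫ α in (0:ℝ)..1, ‖∑ n ∈ AN A N ∩ AN B N, e (n * α)‖ ^ p := by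
        rw [Ip, hANeq]
    _ ≤ (Ip q A N) ^ (p/q) * (Ip r B N) ^ (p/r) := hyoung
    _ ≤ (max Ca 0 * N ^ (q-1)) ^ (p/q) * (max Cb 0 * N ^ (r-1)) ^ (p/r) := by
        apply mul_le_mul
        · exact Real.rpow_le_rpow (Ipnn q A N) hCa (by positivity)
        · exact Real.rpow_le_rpow (Ipnn r B N) hCb (by positivity)
        · exact Real.rpow_nonneg (Ipnn r B N) _
        · exact Real.rpow_nonneg (mul_nonneg (le_max_right Ca 0) hNq) _
    _ = (max Ca 0) ^ (p/q) * (max Cb 0) ^ (p/r) * N ^ (p - 1) := by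
        rw [Real.mul_rpow (le_max_right Ca 0) hNq, Real.mul_rpow (le_max_right Cb 0) hNr,
          ← Real.rpow_mul hN0.le, ← Real.rpow_mul hN0.le, ← expo,
          Real.rpow_add hN0]
        ring
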